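/- (Tchakaloff) Let μ be a compactly supported probability measure on ℝ^d and N ∈ ℕ. Then there exist M ≤ C(d+N, d) points x_1,…,x_M in the support of μ and positive weights w_1,…,w_M with ∑ w_i = 1 such that ∑_{i=1}^M w_i p(x_i) = ∫ p dμ for every polynomial p of total degree at most N. -/

import Mathlib

/-!
The moment map `Φ y = (y ^ s)_{deg s ≤ N}` is continuous, so it sends the compact support `K`
of `μ` to a compact set; in finite dimensions its convex hull is again compact, hence closed,
and therefore contains the moment vector `∫ Φ dμ`. Carathéodory's theorem writes this vector as
a positive convex combination of affinely independent points `Φ (x i)` with `x i ∈ K`. Every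
`Φ y` has coordinate `y ^ 0 = 1`, so these points are even linearly independent and there are
at most `dim = C(d + N, d)` of them. Exactness on polynomials of degree `≤ N` is linearity.
-/

open MeasureTheory

def measSupp {X : Type*} [TopologicalSpace X] [MeasurableSpace X]
    (μ : Measure X) : Set X :=
  {x | ∀ U ∈ nhds x, μ U ≠ 0}

open Finset

theorem measSupp_eq_support {X : Type*} [TopologicalSpace X] [MeasurableSpace X]
    (μ : Measure X) : measSupp μ = μ.support := by
  ext x
  simp [measSupp, Measure.mem_support_iff_forall, pos_iff_ne_zero]

section ConvexHull

variable {E : Type*} [NormedAddCommGroup E] [NormedSpace ℝ E] [FiniteDimensional ℝ E]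

theorem exists_stdSimplex_sum_smul_eq_of_mem_convexHull {s : Set E} {x : E}
    (hx : x ∈ convexHull ℝ s) :
    ∃ w ∈ stdSimplex ℝ (Fin (Module.finrank ℝ E + 1)), ∃ z : Fin (Module.finrank ℝ E + 1) → E,
      (∀ j, z j ∈ s) ∧ ∑ j, w j • z j = x := by
  obtain ⟨ι, _, z, w, hzs, hai, hw0, hw1, rfl⟩ := eq_pos_convex_span_of_mem_convexHull hx
  have hcard : Fintype.card ι ≤ Fintype.card (Fin (Module.finrank ℝ E + 1)) := by
    simpa using hai.card_le_finrank_succ.trans (Nat.succ_le_succ (Submodule.finrank_le _))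
  obtain ⟨e⟩ := Function.Embedding.nonempty_of_card_le hcard
  obtain ⟨i₀, -⟩ := Finset.nonempty_of_sum_ne_zero (hw1.trans_ne one_ne_zero)
  -- Pad the Carathéodory combination along `e` with weight `0` at the point `z i₀`.
  set w' := Function.extend e w 0
  set z' := Function.extend e z fun _ => z i₀
  have hw' : ∀ j ∉ Set.range e, w' j = 0 := fun j hj =>
    Function.extend_apply' _ _ _ (by simpa using hj)
  have hz' : ∀ j, ∃ i, z' j = z i := fun j => by
    by_cases hj : ∃ i, e i = j
    · obtain ⟨i, rfl⟩ := hj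
      exact ⟨i, e.injective.extend_apply _ _ _⟩
    · exact ⟨i₀, Function.extend_apply' _ _ _ hj⟩
  refine ⟨w', ⟨fun j => ?_, ?_⟩, z', fun j => ?_, ?_⟩
  · by_cases hj : j ∈ Set.range e
    · obtain ⟨i, rfl⟩ := hj
      simpa [w', e.injective.extend_apply] using (hw0 i).le
    · exact (hw' j hj).ge
  · rw [← hw1]
    exact (Fintype.sum_of_injective e e.injective w w' hw' fun i =>
      (e.injective.extend_apply _ _ _).symm).symm
  · obtain ⟨i, hi⟩ := hz' j
    exact hi ▸ hzs (Set.mem_range_self i)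
  · exact (Fintype.sum_of_injective e e.injective _ _ (fun j hj => by simp [hw' j hj])
      fun i => by simp [w', z', e.injective.extend_apply]).symm

theorem IsCompact.convexHull {s : Set E} (hs : IsCompact s) :
    IsCompact (_root_.convexHull ℝ s) := by
  set n := Module.finrank ℝ E
  have hG : Continuous fun q : (Fin (n + 1) → ℝ) × (Fin (n + 1) → E) => ∑ j, q.1 j • q.2 j := by
    fun_prop
  convert ((isCompact_stdSimplex ℝ (Fin (n + 1))).prod (isCompact_univ_pi fun _ => hs)).image hG
  ext x
  constructor
  · intro hx
    obtain ⟨w, hw, z, hz, rfl⟩ := exists_stdSimplex_sum_smul_eq_of_mem_convexHull hx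
    exact ⟨(w, z), ⟨hw, fun j _ => hz j⟩, rfl⟩
  · rintro ⟨⟨w, z⟩, ⟨⟨hw0, hw1⟩, hz⟩, rfl⟩
    exact (convex_convexHull ℝ s).sum_mem (fun j _ => hw0 j) hw1
      fun j _ => subset_convexHull ℝ s (hz j trivial)

theorem integral_mem_convexHull {X : Type*} [MeasurableSpace X] {μ : Measure X}
    [IsProbabilityMeasure μ] {f : X → E} {s : Set E} (hs : IsCompact s) (hf : Integrable f μ)
    (hfs : ∀ᵐ x ∂μ, f x ∈ s) : ∫ x, f x ∂μ ∈ convexHull ℝ s :=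
  (convex_convexHull ℝ s).integral_mem hs.convexHull.isClosed
    (hfs.mono fun _ hx => subset_convexHull ℝ s hx) hf

end ConvexHull

theorem AffineIndependent.linearIndependent_of_map_eq_one {k V ι : Type*} [Ring k]
    [AddCommGroup V] [Module k V] {p : ι → V} (hp : AffineIndependent k p) (ℓ : V →ₗ[k] k)
    (hℓ : ∀ i, ℓ (p i) = 1) : LinearIndependent k p :=
  linearIndependent_iff'.2 fun s g hg =>
    hp.eq_zero_of_sum_eq_zero (by simpa [hℓ] using congr_arg ℓ hg) hg

section CompactSupport

variable {X E : Type*} [TopologicalSpace X] [T2Space X] [HereditarilyLindelofSpace X]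
  [MeasurableSpace X] [OpensMeasurableSpace X] {μ : Measure X} [NormedAddCommGroup E]

theorem Continuous.integrable_of_isCompact_support [IsFiniteMeasure μ] {f : X → E}
    (hf : Continuous f) (hμ : IsCompact μ.support) : Integrable f μ := by
  rw [← Measure.restrict_eq_self_of_ae_mem (Measure.support_mem_ae (μ := μ))]
  exact hf.continuousOn.integrableOn_compact hμ

theorem exists_quadrature_of_isCompact_support [NormedSpace ℝ E] [FiniteDimensional ℝ E]
    [IsProbabilityMeasure μ] (hμ : IsCompact μ.support) {Φ : X → E} (hΦ : Continuous Φ)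
    (ℓ : E →ₗ[ℝ] ℝ) (hℓ : ∀ x, ℓ (Φ x) = 1) :
    ∃ M ≤ Module.finrank ℝ E, ∃ (x : Fin M → X) (w : Fin M → ℝ), (∀ i, 0 < w i) ∧
      (∀ i, x i ∈ μ.support) ∧ ∑ i, w i = 1 ∧ ∑ i, w i • Φ (x i) = ∫ y, Φ y ∂μ := by
  obtain ⟨ι, _, z, w, hz, hai, hw0, hw1, hzw⟩ := eq_pos_convex_span_of_mem_convexHull <|
    integral_mem_convexHull (hμ.image hΦ) (hΦ.integrable_of_isCompact_support hμ)
      (Filter.eventually_of_mem Measure.support_mem_ae fun y hy => Set.mem_image_of_mem Φ hy)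
  choose x hx hxz using fun i => hz (Set.mem_range_self i)
  have hcard : Fintype.card ι ≤ Module.finrank ℝ E :=
    (hai.linearIndependent_of_map_eq_one ℓ fun i => hxz i ▸ hℓ (x i)).fintype_card_le_finrank
  let e := (Fintype.equivFin ι).symm
  refine ⟨Fintype.card ι, hcard, x ∘ e, w ∘ e, fun i => hw0 _, fun i => hx _, ?_, ?_⟩
  · rwa [← e.sum_comp w] at hw1
  · simp only [Function.comp_apply, hxz]
    rwa [← e.sum_comp fun i => w i • z i] at hzw

end CompactSupport

noncomputable def Finsupp.degreeLE (σ : Type*) [Fintype σ] [DecidableEq σ] (N : ℕ) :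
    Finset (σ →₀ ℕ) :=
  (range (N + 1)).biUnion fun k => univ.finsuppAntidiag k

namespace Finsupp

variable {σ : Type*} [Fintype σ] [DecidableEq σ] {N : ℕ}

theorem mem_degreeLE {s : σ →₀ ℕ} : s ∈ degreeLE σ N ↔ s.degree ≤ N := by
  simp [degreeLE, mem_finsuppAntidiag, degree_eq_sum]

theorem card_degreeLE : #(degreeLE σ N) = (Fintype.card σ + N).choose (Fintype.card σ) := by
  rw [degreeLE, card_biUnion]
  · simp only [card_finsuppAntidiag_nat_eq_multichoose, card_univ]
    rw [Nat.sum_range_multichoose, add_comm]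
  · intro k _ l _ hkl
    exact disjoint_left.2 fun s hk hl =>
      hkl ((mem_finsuppAntidiag.1 hk).1.symm.trans (mem_finsuppAntidiag.1 hl).1)

end Finsupp

theorem MvPolynomial.eval_eq_sum_degreeLE {σ R : Type*} [Fintype σ] [DecidableEq σ]
    [CommSemiring R] {N : ℕ} {p : MvPolynomial σ R} (hp : p.totalDegree ≤ N) (y : σ → R) :
    eval y p = ∑ s ∈ Finsupp.degreeLE σ N, coeff s p * ∏ i, y i ^ s i := by
  rw [eval_eq']
  refine sum_subset (fun s hs => Finsupp.mem_degreeLE.2 ((le_totalDegree hs).trans hp))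
    fun s _ hs => by simp [notMem_support_iff.1 hs]

/-- Tchakaloff's theorem: a compactly supported probability measure on ℝ^d admits, for each
degree `N`, a quadrature rule with at most `C(d+N, d)` nodes in the support of `μ`,
positive weights summing to 1, exact for all polynomials of total degree ≤ N. -/
theorem stmt_2 (d N : ℕ) (μ : Measure (Fin d → ℝ)) [IsProbabilityMeasure μ]
    (hcpt : IsCompact (measSupp μ)) :
    ∃ M : ℕ, M ≤ (d + N).choose d ∧
      ∃ (x : Fin M → (Fin d → ℝ)) (w : Fin M → ℝ),
        (∀ i, 0 < w i) ∧ (∀ i, x i ∈ measSupp μ) ∧ (∑ i, w i = 1) ∧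
        ∀ p : MvPolynomial (Fin d) ℝ, p.totalDegree ≤ N →
          ∑ i, w i * MvPolynomial.eval (x i) p = ∫ y, MvPolynomial.eval y p ∂μ := by
  let S := Finsupp.degreeLE (Fin d) N
  let Φ : (Fin d → ℝ) → (S → ℝ) := fun y s => ∏ i, y i ^ (s : Fin d →₀ ℕ) i
  have hΦ : Continuous Φ := by fun_prop
  have h0 : (0 : Fin d →₀ ℕ) ∈ S := Finsupp.mem_degreeLE.2 (by simp)
  rw [measSupp_eq_support] at hcpt ⊢
  obtain ⟨M, hM, x, w, hw, hx, hw1, hxw⟩ := exists_quadrature_of_isCompact_support hcpt hΦ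
    (LinearMap.proj ⟨0, h0⟩) fun y => by simp [Φ]
  have hdim : Module.finrank ℝ (S → ℝ) = (d + N).choose d := by simp [S, Finsupp.card_degreeLE]
  refine ⟨M, hdim ▸ hM, x, w, hw, hx, hw1, fun p hp => ?_⟩
  let L : (S → ℝ) →L[ℝ] ℝ := ∑ s : S, MvPolynomial.coeff s p • ContinuousLinearMap.proj s
  have hL : ∀ y, MvPolynomial.eval y p = L (Φ y) := fun y => by
    rw [MvPolynomial.eval_eq_sum_degreeLE hp, ← sum_coe_sort]
    simp [L, Φ, S]
  calc ∑ i, w i * MvPolynomial.eval (x i) p = L (∑ i, w i • Φ (x i)) := by simp [hL, map_sum]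
    _ = ∫ y, MvPolynomial.eval y p ∂μ := by
      rw [hxw, ← L.integral_comp_comm (hΦ.integrable_of_isCompact_support hcpt)]
      simp [hL]
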